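/- The family {J_m : m ∈ ℕ^l} is linearly independent over the subfield ℚ(q) of F = ℚ(q, z_1,…,z_l): if a finite ℚ(q)-linear combination ∑_m c_m J_m equals 0, then all coefficients c_m vanish. -/

import Mathlib

/- STATEMENT 10: The family {J_m : m ∈ ℕ^l} is linearly independent over the
   subfield ℚ(q) of F = ℚ(q, z_1, …, z_l): if a finite ℚ(q)-linear combination
   ∑ c_m J_m vanishes then all the coefficients c_m vanish.  (Since F has
   characteristic 0, the subfield ℚ(q) is the subfield generated by q.) -/

noncomputable section

open scoped BigOperators

/-- The field ℚ(q, z_1, …, z_l). -/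
abbrev FF (l : ℕ) : Type := FractionRing (MvPolynomial (Fin (l + 1)) ℚ)

/-- the variable q -/
def qv (l : ℕ) : FF l :=
  algebraMap (MvPolynomial (Fin (l + 1)) ℚ) (FF l) (MvPolynomial.X 0)

/-- the variables z_i -/
def zv (l : ℕ) (i : Fin l) : FF l :=
  algebraMap (MvPolynomial (Fin (l + 1)) ℚ) (FF l) (MvPolynomial.X i.succ)

/-- `W(a) = (1/2)∑ B_{ij} a_i a_j − ∑ d_i a_i`  (the double sum is even, so
integer division by 2 gives the exact value). -/
def W9 {l : ℕ} (B : Matrix (Fin l) (Fin l) ℤ) (d : Fin l → ℕ) (a : Fin l → ℕ) : ℤ :=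
  (∑ i, ∑ j, B i j * a i * a j) / 2 - ∑ i, (d i : ℤ) * a i

/-- `(Q;Q)_n = ∏_{k=1}^n (1 − Q^k)` -/
def pochQ {F : Type} [Field F] (Q : F) (n : ℕ) : F :=
  ∏ k ∈ Finset.range n, (1 - Q ^ (k + 1))

/-- `J` is the family of rational functions satisfying `J 0 = 1` and the
fermionic recursion with variables `q`, `z`. -/
def IsFerm {l : ℕ} (B : Matrix (Fin l) (Fin l) ℤ) (d : Fin l → ℕ)
    {F : Type} [Field F] (q : F) (z : Fin l → F) (J : (Fin l → ℕ) → F) : Prop :=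
  J 0 = 1 ∧ ∀ m : Fin l → ℕ, J m = ∑ a ∈ Finset.Iic m,
    (∏ i, z i ^ a i) * q ^ (W9 B d a) *
      (∏ i, pochQ (q ^ d i) (m i - a i))⁻¹ * J a

/-- The subfield ℚ(q) ⊂ ℚ(q,z_1,…,z_l): the subfield generated by q
(it automatically contains the prime field ℚ). -/
def Qq (l : ℕ) : Subfield (FF l) := Subfield.closure {qv l}

/-! Put `q = 1`. The element `(1 - q)^|m| J_m` is regular there: multiplying the recursion by
`(1 - q)^|m|` makes each coefficient regular, since `(1 - q)^n / (q^d; q^d)_n → 1 / (d^n n!)`, and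
at `q = 1` the recursion becomes one that is solved, by the binomial theorem, by
`∏ᵢ (dᵢ^mᵢ mᵢ! (1 - zᵢ)^mᵢ)⁻¹`. A nonzero element of `ℚ(q)` is `(1 - q)^v` times a function
that is a nonzero rational number at `q = 1`. So in a relation `∑ c_m J_m = 0`, dividing by the
lowest power of `1 - q` that occurs and putting `q = 1` gives a nontrivial `ℚ`-linear relation
between the functions `∏ᵢ (1 - zᵢ)^(-mᵢ)`, which are linearly independent. -/

namespace HasResidue

variable {A A' : Type*} [CommRing A] [CommRing A'] [IsDomain A'] {f : A →+* A'}

/-- `x` lies in the localization of `A` at the prime `ker f`, and `x'` is its image under the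
map to `Frac A'` induced by `f`. -/
def _root_.HasResidue (f : A →+* A') (x : FractionRing A) (x' : FractionRing A') : Prop :=
  ∃ a b : A, f b ≠ 0 ∧ x * algebraMap A _ b = algebraMap A _ a ∧
    x' * algebraMap A' _ (f b) = algebraMap A' _ (f a)

local notation "φ" => algebraMap A (FractionRing A)
local notation "φ'" => algebraMap A' (FractionRing A')

lemma algebraMap_apply (a : A) : HasResidue f (φ a) (φ' (f a)) :=
  ⟨a, 1, by simp, by simp, by simp⟩

lemma zero : HasResidue f 0 0 := by simpa using algebraMap_apply (f := f) 0

lemma one : HasResidue f 1 1 := by simpa using algebraMap_apply (f := f) 1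

lemma intCast (n : ℤ) : HasResidue f n n := by simpa using algebraMap_apply (f := f) n

variable {x y : FractionRing A} {x' y' : FractionRing A'}

lemma unique (h : HasResidue f x x') (h' : HasResidue f x y') : x' = y' := by
  obtain ⟨a, b, hb, hx, hx'⟩ := h
  obtain ⟨c, e, he, hy, hy'⟩ := h'
  have hae : a * e = c * b := IsFractionRing.injective A (FractionRing A) <| by
    rw [map_mul, map_mul, ← hx, ← hy]; ring
  have hbe : φ' (f b) * φ' (f e) ≠ 0 := by simp [hb, he]
  refine mul_right_cancel₀ hbe ?_
  calc x' * (φ' (f b) * φ' (f e)) = φ' (f (a * e)) := by rw [← mul_assoc, hx']; simp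
    _ = y' * (φ' (f b) * φ' (f e)) := by rw [hae, map_mul, map_mul, ← hy']; ring

lemma add (hx : HasResidue f x x') (hy : HasResidue f y y') :
    HasResidue f (x + y) (x' + y') := by
  obtain ⟨a, b, hb, hx, hx'⟩ := hx
  obtain ⟨c, e, he, hy, hy'⟩ := hy
  refine ⟨a * e + c * b, b * e, by simp [hb, he], ?_, ?_⟩
  · simp only [map_add, map_mul]; rw [← hx, ← hy]; ring
  · simp only [map_add, map_mul]; rw [← hx', ← hy']; ring

lemma mul (hx : HasResidue f x x') (hy : HasResidue f y y') :
    HasResidue f (x * y) (x' * y') := by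
  obtain ⟨a, b, hb, hx, hx'⟩ := hx
  obtain ⟨c, e, he, hy, hy'⟩ := hy
  refine ⟨a * c, b * e, by simp [hb, he], ?_, ?_⟩
  · simp only [map_mul]; rw [← hx, ← hy]; ring
  · simp only [map_mul]; rw [← hx', ← hy']; ring

lemma neg (hx : HasResidue f x x') : HasResidue f (-x) (-x') := by
  simpa using (intCast (f := f) (-1)).mul hx

lemma sub (hx : HasResidue f x x') (hy : HasResidue f y y') :
    HasResidue f (x - y) (x' - y') := by
  simpa [sub_eq_add_neg] using hx.add hy.neg

lemma ne_zero (hx : HasResidue f x x') (hx' : x' ≠ 0) : x ≠ 0 := by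
  rintro rfl
  exact hx' (hx.unique zero)

lemma pow (hx : HasResidue f x x') (n : ℕ) : HasResidue f (x ^ n) (x' ^ n) := by
  induction n with
  | zero => simpa using one
  | succ n ih => simpa [pow_succ] using ih.mul hx

lemma sum {ι : Type*} {s : Finset ι} {u : ι → FractionRing A} {u' : ι → FractionRing A'}
    (hu : ∀ i ∈ s, HasResidue f (u i) (u' i)) :
    HasResidue f (∑ i ∈ s, u i) (∑ i ∈ s, u' i) := by
  classical
  induction s using Finset.induction_on with
  | empty => simpa using zero
  | insert i s hi ih =>
    rw [Finset.sum_insert hi, Finset.sum_insert hi]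
    exact (hu i (by simp)).add (ih fun j hj => hu j (by simp [hj]))

lemma prod {ι : Type*} {s : Finset ι} {u : ι → FractionRing A} {u' : ι → FractionRing A'}
    (hu : ∀ i ∈ s, HasResidue f (u i) (u' i)) :
    HasResidue f (∏ i ∈ s, u i) (∏ i ∈ s, u' i) := by
  classical
  induction s using Finset.induction_on with
  | empty => simpa using one
  | insert i s hi ih =>
    rw [Finset.prod_insert hi, Finset.prod_insert hi]
    exact (hu i (by simp)).mul (ih fun j hj => hu j (by simp [hj]))

lemma aeval (hx : HasResidue f x x') (P : Polynomial ℤ) :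
    HasResidue f (Polynomial.aeval x P) (Polynomial.aeval x' P) := by
  simp only [Polynomial.aeval_eq_sum_range]
  exact sum fun n _ => by simpa [zsmul_eq_mul] using (intCast _).mul (hx.pow n)

lemma geom_sum (hx : HasResidue f x 1) (n : ℕ) :
    HasResidue f (∑ j ∈ Finset.range n, x ^ j) n := by
  simpa using sum (s := Finset.range n) fun j _ => hx.pow j

variable [IsDomain A]

lemma inv (hx : HasResidue f x x') (hx' : x' ≠ 0) : HasResidue f x⁻¹ x'⁻¹ := by
  have hx0 := hx.ne_zero hx'
  obtain ⟨a, b, hb, hxb, hxb'⟩ := hx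
  have ha : f a ≠ 0 := by
    rintro h0
    rw [h0, map_zero] at hxb'
    simp_all
  refine ⟨b, a, ha, ?_, ?_⟩
  · rw [← hxb, inv_mul_cancel_left₀ hx0]
  · rw [← hxb', inv_mul_cancel_left₀ hx']

lemma zpow (hx : HasResidue f x x') (hx' : x' ≠ 0) (n : ℤ) : HasResidue f (x ^ n) (x' ^ n) := by
  cases n with
  | ofNat n => simpa using hx.pow n
  | negSucc n => simpa using (hx.pow (n + 1)).inv (pow_ne_zero _ hx')

lemma of_eq_mul_add {κ w : FractionRing A} {κ' w' : FractionRing A'}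
    (hκ : HasResidue f κ κ') (hw : HasResidue f w w') (hκ' : κ' ≠ 1)
    (hy : y = κ * y + w) (hy' : y' = κ' * y' + w') : HasResidue f y y' := by
  have h1κ' : 1 - κ' ≠ 0 := sub_ne_zero.mpr hκ'.symm
  have h1κ : 1 - κ ≠ 0 := (one.sub hκ).ne_zero h1κ'
  have hy₀ : y = (1 - κ)⁻¹ * w := by
    rw [eq_inv_mul_iff_mul_eq₀ h1κ]; linear_combination hy
  have hy₀' : y' = (1 - κ')⁻¹ * w' := by
    rw [eq_inv_mul_iff_mul_eq₀ h1κ']; linear_combination hy'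
  rw [hy₀, hy₀']
  exact ((one.sub hκ).inv h1κ').mul hw

lemma of_eq_sum {ι : Type*} [DecidableEq ι] {s : Finset ι} {i₀ : ι} (hi₀ : i₀ ∈ s)
    {κ u : ι → FractionRing A} {κ' u' : ι → FractionRing A'}
    (hκ : ∀ i ∈ s, HasResidue f (κ i) (κ' i)) (hu : ∀ i ∈ s.erase i₀, HasResidue f (u i) (u' i))
    (hκ' : κ' i₀ ≠ 1) (hrec : u i₀ = ∑ i ∈ s, κ i * u i)
    (hrec' : u' i₀ = ∑ i ∈ s, κ' i * u' i) : HasResidue f (u i₀) (u' i₀) := by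
  rw [← Finset.add_sum_erase _ _ hi₀] at hrec hrec'
  exact of_eq_mul_add (hκ i₀ hi₀)
    (sum fun i hi => (hκ i (Finset.mem_of_mem_erase hi)).mul (hu i hi)) hκ' hrec hrec'

lemma sum_filter_inf'_eq_zero {ι : Type*} {π : FractionRing A} (hπ : HasResidue f π 0)
    (hπ0 : π ≠ 0) {s : Finset ι} (hs : s.Nonempty) (e : ι → ℤ) {u : ι → FractionRing A}
    {u' : ι → FractionRing A'} (hu : ∀ i ∈ s, HasResidue f (u i) (u' i))
    (h : ∑ i ∈ s, π ^ e i * u i = 0) :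
    ∑ i ∈ s with e i = s.inf' hs e, u' i = 0 := by
  set t := s.inf' hs e
  have hshift : ∀ i ∈ s, π ^ (-t) * (π ^ e i * u i) = π ^ (e i - t).toNat * u i := by
    intro i hi
    have : (((e i - t).toNat : ℕ) : ℤ) = -t + e i := by
      have := s.inf'_le e hi; omega
    rw [← mul_assoc, ← zpow_add₀ hπ0, ← this, zpow_natCast]
  have hsum : ∑ i ∈ s, π ^ (e i - t).toNat * u i = 0 := by
    rw [← Finset.sum_congr rfl hshift, ← Finset.mul_sum, h, mul_zero]
  have hres := (sum fun i hi => (hπ.pow (e i - t).toNat).mul (hu i hi)).unique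
    (hsum ▸ zero (f := f))
  refine (Finset.sum_filter _ _).trans (Eq.trans ?_ hres)
  refine Finset.sum_congr rfl fun i hi => ?_
  have := s.inf'_le e hi
  split_ifs with hit
  · simp [hit, t]
  · rw [zero_pow (by omega), zero_mul]

lemma exists_zpow_mul_aeval (hx : HasResidue f x 1) (hx1 : x ≠ 1) {P : Polynomial ℤ}
    (hP : P ≠ 0) :
    ∃ (v : ℤ) (r : ℚ), r ≠ 0 ∧ HasResidue f ((1 - x) ^ v * Polynomial.aeval x P) r := by
  set α := P.rootMultiplicity 1
  set R := P /ₘ (Polynomial.X - Polynomial.C 1) ^ α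
  have hR : R.eval 1 ≠ 0 := Polynomial.eval_divByMonic_pow_rootMultiplicity_ne_zero 1 hP
  have hlin : Polynomial.aeval x (Polynomial.X - Polynomial.C 1 : Polynomial ℤ) = -(1 - x) := by
    simp
  have hPR : (1 - x) ^ (-α : ℤ) * Polynomial.aeval x P = (-1) ^ α * Polynomial.aeval x R := by
    have h1x : (1 - x) ^ α ≠ 0 := pow_ne_zero _ (sub_ne_zero.mpr hx1.symm)
    rw [← Polynomial.pow_mul_divByMonic_rootMultiplicity_eq P 1, map_mul, map_pow, hlin,
      neg_pow, zpow_neg, zpow_natCast]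
    field_simp
    ring
  have hRres : HasResidue f (Polynomial.aeval x R) ((R.eval 1 : ℤ) : FractionRing A') := by
    simpa [Polynomial.aeval_def, Polynomial.eval₂_at_one] using hx.aeval R
  refine ⟨-α, (-1) ^ α * R.eval 1, by simp [hR], ?_⟩
  rw [hPR]
  exact_mod_cast ((intCast (-1)).pow α).mul hRres

lemma exists_zpow_mul_of_mem_closure [CharZero (FractionRing A')] (hx : HasResidue f x 1)
    (hx1 : x ≠ 1) (hy : y ∈ Subfield.closure {x}) (hy0 : y ≠ 0) :
    ∃ (v : ℤ) (r : ℚ), r ≠ 0 ∧ HasResidue f ((1 - x) ^ v * y) r := by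
  have hpoly : ∀ z ∈ Subring.closure {x}, ∃ P : Polynomial ℤ, Polynomial.aeval x P = z :=
    fun z hz => Subring.closure_le (t := (Polynomial.aeval x).range.toSubring).mpr
      (by simpa using ⟨Polynomial.X, Polynomial.aeval_X x⟩) hz
  obtain ⟨_, hP, _, hQ, rfl⟩ := Subfield.mem_closure_iff.mp hy
  obtain ⟨P, rfl⟩ := hpoly _ hP
  obtain ⟨Q, rfl⟩ := hpoly _ hQ
  obtain ⟨hP0, hQ0⟩ := div_ne_zero_iff.mp hy0
  obtain ⟨v, r, hr, hPres⟩ := exists_zpow_mul_aeval hx hx1 (P := P) (by rintro rfl; simp at hP0)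
  obtain ⟨w, s, hs, hQres⟩ := exists_zpow_mul_aeval hx hx1 (P := Q) (by rintro rfl; simp at hQ0)
  refine ⟨v - w, r / s, div_ne_zero hr hs, ?_⟩
  rw [zpow_sub₀ (sub_ne_zero.mpr hx1.symm), Rat.cast_div]
  convert hPres.mul (hQres.inv (by exact_mod_cast hs)) using 1 <;> field_simp

end HasResidue

lemma HasResidue.pow_mul_inv_pochQ {A A' : Type} [CommRing A] [IsDomain A] [CommRing A']
    [IsDomain A'] [CharZero (FractionRing A')] {f : A →+* A'} {x : FractionRing A}
    (hx : HasResidue f x 1) (hx1 : x ≠ 1) {d : ℕ} (hd : 0 < d) (n : ℕ) :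
    HasResidue f ((1 - x) ^ n * (pochQ (x ^ d) n)⁻¹) ((d ^ n * n.factorial : ℕ) : _)⁻¹ := by
  have hx0 : (1 - x) ^ n ≠ 0 := pow_ne_zero _ (sub_ne_zero.mpr hx1.symm)
  have hpoch : pochQ (x ^ d) n =
      (1 - x) ^ n * ∏ k ∈ Finset.range n, ∑ j ∈ Finset.range (d * (k + 1)), x ^ j := by
    simp only [pochQ, ← pow_mul, ← mul_neg_geom_sum, Finset.prod_mul_distrib,
      Finset.prod_const, Finset.card_range]
  have hfact : ((d ^ n * n.factorial : ℕ) : FractionRing A') =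
      ∏ k ∈ Finset.range n, ((d * (k + 1) : ℕ) : FractionRing A') := by
    rw [← Nat.cast_prod, Finset.prod_mul_distrib, Finset.prod_const, Finset.card_range,
      Finset.prod_range_add_one_eq_factorial]
  rw [hpoch, mul_inv, ← mul_assoc, mul_inv_cancel₀ hx0, one_mul, hfact,
    ← Finset.prod_inv_distrib, ← Finset.prod_inv_distrib]
  exact prod fun k _ => (hx.geom_sum _).inv (Nat.cast_ne_zero.mpr (by positivity))

section ResidueIdentity

variable {K : Type*} [Field K] [CharZero K]

lemma sum_Iic_pow_mul_inv_factorial (y : K) (hy : y ≠ 0) {D : ℕ} (hD : D ≠ 0) (M : ℕ) :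
    ∑ t ∈ Finset.Iic M, (1 - y) ^ t * ((D ^ (M - t) * (M - t).factorial : ℕ) : K)⁻¹ *
        (((D ^ t * t.factorial : ℕ) : K) * y ^ t)⁻¹ =
      (((D ^ M * M.factorial : ℕ) : K) * y ^ M)⁻¹ := by
  have hterm : ∀ t ∈ Finset.range (M + 1),
      (1 - y) ^ t * ((D ^ (M - t) * (M - t).factorial : ℕ) : K)⁻¹ *
          (((D ^ t * t.factorial : ℕ) : K) * y ^ t)⁻¹ =
        (1 - y) ^ t * y ^ (M - t) * (M.choose t : K) *
          (((D ^ M * M.factorial : ℕ) : K) * y ^ M)⁻¹ := by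
    intro t ht
    have htM : t ≤ M := Nat.lt_succ_iff.mp (Finset.mem_range.mp ht)
    have hM : D ^ M * M.factorial =
        D ^ (M - t) * (M - t).factorial * (D ^ t * t.factorial) * M.choose t := by
      rw [← Nat.choose_mul_factorial_mul_factorial htM, ← pow_sub_mul_pow D htM]; ring
    have : (M.choose t : K) ≠ 0 := Nat.cast_ne_zero.mpr (Nat.choose_pos htM).ne'
    rw [hM, ← pow_sub_mul_pow y htM]
    push_cast
    field_simp
  rw [← Nat.range_succ_eq_Iic, Finset.sum_congr rfl hterm, ← Finset.sum_mul, ← add_pow,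
    sub_add_cancel, one_pow, one_mul]

variable {ι : Type*} [Fintype ι]

def residueJ (d : ι → ℕ) (y : ι → K) (m : ι → ℕ) : K :=
  ∏ i, (((d i ^ m i * (m i).factorial : ℕ) : K) * y i ^ m i)⁻¹

lemma residueJ_mul_prod_pow {d : ι → ℕ} {y : ι → K} (hy : ∀ i, y i ≠ 0) {m M : ι → ℕ}
    (hm : m ≤ M) :
    residueJ d y m * ∏ i, y i ^ M i =
      (∏ i, ((d i ^ m i * (m i).factorial : ℕ) : K))⁻¹ * ∏ i, y i ^ (M i - m i) := by
  rw [residueJ, ← Finset.prod_inv_distrib, ← Finset.prod_mul_distrib, ← Finset.prod_mul_distrib]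
  refine Finset.prod_congr rfl fun i _ => ?_
  rw [mul_inv, pow_sub₀ _ (hy i) (hm i)]
  ring

lemma sum_Iic_mul_residueJ [DecidableEq ι] {d : ι → ℕ} (hd : ∀ i, d i ≠ 0) {y : ι → K}
    (hy : ∀ i, y i ≠ 0) (m : ι → ℕ) :
    ∑ a ∈ Finset.Iic m, (∏ i, (1 - y i) ^ a i *
        ((d i ^ (m i - a i) * (m i - a i).factorial : ℕ) : K)⁻¹) * residueJ d y a =
      residueJ d y m := by
  simp only [residueJ, ← Finset.prod_mul_distrib]
  calc _ = ∏ i, ∑ t ∈ Finset.Iic (m i), (1 - y i) ^ t *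
          ((d i ^ (m i - t) * (m i - t).factorial : ℕ) : K)⁻¹ *
          (((d i ^ t * t.factorial : ℕ) : K) * y i ^ t)⁻¹ :=
        (Finset.prod_univ_sum (fun i => Finset.Iic (m i)) _).symm
    _ = _ := Finset.prod_congr rfl fun i _ =>
        sum_Iic_pow_mul_inv_factorial (y i) (hy i) (hd i) (m i)

end ResidueIdentity

section Recursion

variable {l : ℕ} {F : Type} [Field F]

def normalizedRecCoeff (B : Matrix (Fin l) (Fin l) ℤ) (d : Fin l → ℕ) (q : F) (z : Fin l → F)
    (m a : Fin l → ℕ) : F :=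
  (∏ i, z i ^ a i) * q ^ W9 B d a *
    ∏ i, ((1 - q) ^ (m i - a i) * (pochQ (q ^ d i) (m i - a i))⁻¹)

lemma IsFerm.one_sub_pow_mul_eq_sum {B : Matrix (Fin l) (Fin l) ℤ} {d : Fin l → ℕ} {q : F}
    {z : Fin l → F} {J : (Fin l → ℕ) → F} (hJ : IsFerm B d q z J) (m : Fin l → ℕ) :
    (1 - q) ^ (∑ i, m i) * J m = ∑ a ∈ Finset.Iic m,
      normalizedRecCoeff B d q z m a * ((1 - q) ^ (∑ i, a i) * J a) := by
  conv_lhs => rw [hJ.2 m]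
  rw [Finset.mul_sum]
  refine Finset.sum_congr rfl fun a ha => ?_
  have hsplit : (1 - q) ^ (∑ i, m i) = (∏ i, (1 - q) ^ (m i - a i)) * (1 - q) ^ (∑ i, a i) := by
    rw [← Finset.prod_pow_eq_pow_sum, ← Finset.prod_pow_eq_pow_sum, ← Finset.prod_mul_distrib]
    exact Finset.prod_congr rfl fun i _ => (pow_sub_mul_pow _ (Finset.mem_Iic.mp ha i)).symm
  rw [hsplit]
  simp only [normalizedRecCoeff, Finset.prod_mul_distrib, Finset.prod_inv_distrib]
  ring

end Recursion

section Specialization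

open MvPolynomial

/-- The substitution `z_i ↦ 1 - x_i` makes the residues of `(1 - q)^|m| J_m` monomials in the
`x_i⁻¹`. -/
def specializeAtOne (l : ℕ) : MvPolynomial (Fin (l + 1)) ℚ →+* MvPolynomial (Fin l) ℚ :=
  (aeval (Fin.cons 1 fun i => 1 - X i : Fin (l + 1) → MvPolynomial (Fin l) ℚ)).toRingHom

abbrev xv (σ : Type*) (i : σ) : FractionRing (MvPolynomial σ ℚ) :=
  algebraMap (MvPolynomial σ ℚ) _ (X i)

lemma xv_ne_zero {σ : Type*} (i : σ) : xv σ i ≠ 0 := by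
  rw [xv, map_ne_zero_iff _ (IsFractionRing.injective _ _)]
  exact X_ne_zero i

variable {l : ℕ}

lemma hasResidue_qv : HasResidue (specializeAtOne l) (qv l) 1 := by
  simpa [specializeAtOne, qv] using HasResidue.algebraMap_apply (f := specializeAtOne l) (X 0)

lemma hasResidue_zv (i : Fin l) :
    HasResidue (specializeAtOne l) (zv l i) (1 - xv (Fin l) i) := by
  simpa [specializeAtOne, zv] using
    HasResidue.algebraMap_apply (f := specializeAtOne l) (X i.succ)

lemma qv_ne_one : qv l ≠ 1 := by
  rw [qv, ← map_one (algebraMap (MvPolynomial (Fin (l + 1)) ℚ) (FF l)),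
    (IsFractionRing.injective _ _).ne_iff]
  exact fun h => by simpa using congrArg constantCoeff h

lemma prod_one_sub_xv_pow_ne_one {m : Fin l → ℕ} (hm : m ≠ 0) :
    ∏ i, (1 - xv (Fin l) i) ^ m i ≠ 1 := by
  obtain ⟨i, hi⟩ := Function.ne_iff.mp hm
  have hpoly : ∏ i, (1 - X i : MvPolynomial (Fin l) ℚ) ^ m i ≠ 1 := fun h => by
    have h1 := congrArg (eval fun _ => (1 : ℚ)) h
    simp only [map_prod, map_pow, map_sub, map_one, eval_X, sub_self] at h1
    rw [Finset.prod_eq_zero (f := fun i => (0 : ℚ) ^ m i) (Finset.mem_univ i) (zero_pow hi)] at h1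
    exact zero_ne_one h1
  intro h
  apply hpoly
  apply IsFractionRing.injective (MvPolynomial (Fin l) ℚ) (FractionRing (MvPolynomial (Fin l) ℚ))
  simpa using h

lemma hasResidue_normalizedRecCoeff (B : Matrix (Fin l) (Fin l) ℤ) {d : Fin l → ℕ}
    (hd : ∀ i, 0 < d i) (m a : Fin l → ℕ) :
    HasResidue (specializeAtOne l) (normalizedRecCoeff B d (qv l) (zv l) m a)
      (∏ i, (1 - xv (Fin l) i) ^ a i *
        ((d i ^ (m i - a i) * (m i - a i).factorial : ℕ) : FractionRing _)⁻¹) := by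
  have h := ((HasResidue.prod (s := Finset.univ) fun i _ => (hasResidue_zv i).pow (a i)).mul
    (hasResidue_qv.zpow one_ne_zero (W9 B d a))).mul
    (HasResidue.prod (s := Finset.univ) fun i _ =>
      hasResidue_qv.pow_mul_inv_pochQ qv_ne_one (hd i) (m i - a i))
  rwa [one_zpow, mul_one, ← Finset.prod_mul_distrib] at h

theorem hasResidue_J {B : Matrix (Fin l) (Fin l) ℤ} {d : Fin l → ℕ} (hd : ∀ i, 0 < d i)
    {J : (Fin l → ℕ) → FF l} (hJ : IsFerm B d (qv l) (zv l) J) (m : Fin l → ℕ) :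
    HasResidue (specializeAtOne l) ((1 - qv l) ^ (∑ i, m i) * J m)
      (residueJ d (xv (Fin l)) m) := by
  induction m using WellFoundedLT.induction with
  | _ m ih =>
  rcases eq_or_ne m 0 with rfl | hm
  · simpa [hJ.1, residueJ] using HasResidue.one
  refine HasResidue.of_eq_sum (u := fun a => (1 - qv l) ^ (∑ i, a i) * J a)
    (u' := residueJ d (xv (Fin l))) (Finset.mem_Iic.mpr le_rfl)
    (fun a _ => hasResidue_normalizedRecCoeff B hd m a)
    (fun a ha => ih a (lt_of_le_of_ne (Finset.mem_Iic.mp (Finset.mem_of_mem_erase ha))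
      (Finset.ne_of_mem_erase ha))) ?_ (hJ.one_sub_pow_mul_eq_sum m)
    (sum_Iic_mul_residueJ (fun i => (hd i).ne') xv_ne_zero m).symm
  simpa using prod_one_sub_xv_pow_ne_one hm

lemma eq_zero_of_sum_mul_residueJ_eq_zero {σ : Type*} [Fintype σ] {d : σ → ℕ}
    (hd : ∀ i, d i ≠ 0) {T : Finset (σ → ℕ)} {ρ : (σ → ℕ) → ℚ}
    (h : ∑ m ∈ T, (ρ m : FractionRing (MvPolynomial σ ℚ)) * residueJ d (xv σ) m = 0) :
    ∀ m ∈ T, ρ m = 0 := by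
  classical
  set M := T.sup id
  have hle : ∀ m ∈ T, m ≤ M := fun m hm => Finset.le_sup (f := id) hm
  set N : (σ → ℕ) → ℚ := fun m => ∏ i, ((d i ^ m i * (m i).factorial : ℕ) : ℚ)
  have hN : ∀ m, N m ≠ 0 := fun m => Finset.prod_ne_zero_iff.mpr fun i _ =>
    Nat.cast_ne_zero.mpr (by have := hd i; positivity)
  have hmono : ∀ e : σ → ℕ, ∏ i, (X i : MvPolynomial σ ℚ) ^ e i =
      monomial (Finsupp.equivFunOnFinite.symm e) 1 := fun e => by
    rw [monomial_eq, Finsupp.prod_fintype] <;> simp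
  have hC : ∀ r : ℚ, algebraMap (MvPolynomial σ ℚ) (FractionRing (MvPolynomial σ ℚ)) (C r) = r :=
    fun r => by rw [← MvPolynomial.algebraMap_eq, ← IsScalarTower.algebraMap_apply, eq_ratCast]
  -- clear denominators: multiplying by `x^M` turns the relation into one between polynomials
  set P : MvPolynomial σ ℚ := ∑ m ∈ T, C (ρ m / N m) * ∏ i, X i ^ (M - m) i
  have hP : P = 0 := by
    apply IsFractionRing.injective (MvPolynomial σ ℚ) (FractionRing (MvPolynomial σ ℚ))
    rw [map_zero, ← zero_mul (∏ i, xv σ i ^ M i), ← h, Finset.sum_mul]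
    refine (map_sum _ _ _).trans (Finset.sum_congr rfl fun m hm => ?_)
    rw [mul_assoc, residueJ_mul_prod_pow xv_ne_zero (hle m hm)]
    simp [N, hC, div_eq_mul_inv, mul_assoc]
  intro m₀ hm₀
  have hcoeff := congrArg (coeff (Finsupp.equivFunOnFinite.symm (M - m₀))) hP
  simp only [P, hmono, C_mul_monomial, mul_one] at hcoeff
  rw [coeff_sum, Finset.sum_eq_single_of_mem m₀ hm₀, coeff_monomial, if_pos rfl,
    coeff_zero, div_eq_zero_iff] at hcoeff
  · exact hcoeff.resolve_right (hN m₀)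
  · intro m hm hne
    rw [coeff_monomial, if_neg]
    refine fun heq => hne (funext fun i => ?_)
    have := congrFun (Finsupp.equivFunOnFinite.symm.injective heq) i
    have := hle m hm i
    have := hle m₀ hm₀ i
    simp only [Pi.sub_apply] at *
    omega

end Specialization

theorem stmt_10_general (l : ℕ) (B : Matrix (Fin l) (Fin l) ℤ) (d : Fin l → ℕ)
    (hdpos : ∀ i, 0 < d i)
    (J : (Fin l → ℕ) → FF l) (hJ : IsFerm B d (qv l) (zv l) J)
    (S : Finset (Fin l → ℕ)) (c : (Fin l → ℕ) → FF l)
    (hc : ∀ m ∈ S, c m ∈ Qq l)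
    (hsum : ∑ m ∈ S, c m * J m = 0) :
    ∀ m ∈ S, c m = 0 := by
  classical
  by_contra! ⟨m₁, hm₁S, hm₁⟩
  set S' := S.filter fun m => c m ≠ 0
  have hS' : S'.Nonempty := ⟨m₁, Finset.mem_filter.mpr ⟨hm₁S, hm₁⟩⟩
  have hcoeff : ∀ m ∈ S', ∃ (v : ℤ) (r : ℚ), r ≠ 0 ∧
      HasResidue (specializeAtOne l) ((1 - qv l) ^ v * c m) r := fun m hm =>
    hasResidue_qv.exists_zpow_mul_of_mem_closure qv_ne_one (hc m (Finset.mem_filter.mp hm).1)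
      (Finset.mem_filter.mp hm).2
  choose! v r hr hres using hcoeff
  have hπ : 1 - qv l ≠ 0 := sub_ne_zero.mpr qv_ne_one.symm
  set e : (Fin l → ℕ) → ℤ := fun m => -v m - ∑ i, m i
  have hrel : ∑ m ∈ S', (1 - qv l) ^ e m *
      (((1 - qv l) ^ v m * c m) * ((1 - qv l) ^ (∑ i, m i) * J m)) = 0 := by
    rw [← (Finset.sum_filter_of_ne fun m _ h => left_ne_zero_of_mul h).trans hsum]
    refine Finset.sum_congr rfl fun m _ => ?_
    rw [zpow_sub₀ hπ, zpow_neg, zpow_natCast]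
    field_simp
  have hlow := HasResidue.sum_filter_inf'_eq_zero (by simpa using HasResidue.one.sub hasResidue_qv)
    hπ hS' e (fun m hm => (hres m hm).mul (hasResidue_J hdpos hJ m)) hrel
  obtain ⟨m₀, hm₀, hmin⟩ := Finset.exists_mem_eq_inf' hS' e
  exact hr m₀ hm₀ (eq_zero_of_sum_mul_residueJ_eq_zero (fun i => (hdpos i).ne') hlow m₀
    (Finset.mem_filter.mpr ⟨hm₀, hmin.symm⟩))

theorem stmt_10 (l : ℕ) (hl : 1 ≤ l) (B : Matrix (Fin l) (Fin l) ℤ) (d : Fin l → ℕ)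
    (hsym : B.IsSymm) (hdpos : ∀ i, 0 < d i) (hdiag : ∀ i, B i i = 2 * d i)
    (hoff : ∀ i j, i ≠ j → B i j ≤ 0) (hdvd : ∀ i j, (d i : ℤ) ∣ B i j)
    (hposdef : ∀ x : Fin l → ℤ, x ≠ 0 → 0 < ∑ i, ∑ j, B i j * x i * x j)
    (J : (Fin l → ℕ) → FF l) (hJ : IsFerm B d (qv l) (zv l) J)
    (S : Finset (Fin l → ℕ)) (c : (Fin l → ℕ) → FF l)
    (hc : ∀ m ∈ S, c m ∈ Qq l)
    (hsum : ∑ m ∈ S, c m * J m = 0) :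
    ∀ m ∈ S, c m = 0 :=
  stmt_10_general l B d hdpos J hJ S c hc hsum
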